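/- arXiv:2304.03638 — 2 statements merged into one kernel-verified Lean document; each statement's English description precedes it below -/
import Mathlib

section
/- Let β ∈ (0,1) and let (z_i) be a bounded real sequence with limsup_{i→∞} z_i = z. Then limsup_{i→∞} Σ_{j=0}^{i} β^j z_{i-j} ≤ z/(1-β). -/
open Filter Finset

/-- If `β ∈ (0,1)` and `z` is a bounded real sequence with
`limsup z = L`, then `limsup (fun i => ∑_{j=0}^i β^j z_{i-j}) ≤ L/(1-β)`. -/
theorem limsup_geometric_convolution_le
    (β : ℝ) (hβ0 : 0 < β) (hβ1 : β < 1)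
    (z : ℕ → ℝ) (hbdd : ∃ C : ℝ, ∀ i, |z i| ≤ C)
    (L : ℝ) (hL : Filter.limsup z Filter.atTop = L) :
    Filter.limsup (fun i => ∑ j ∈ Finset.range (i + 1), β ^ j * z (i - j))
      Filter.atTop ≤ L / (1 - β) := by
  obtain ⟨C, hC⟩ := hbdd
  have h1β : 0 < 1 - β := by linarith
  have hC0 : 0 ≤ C := le_trans (abs_nonneg _) (hC 0)
  set f := fun i => ∑ j ∈ Finset.range (i + 1), β ^ j * z (i - j) with hf
  -- geometric sum bound
  have hgeom : ∀ n : ℕ, ∑ j ∈ Finset.range n, β ^ j = (1 - β ^ n) / (1 - β) := by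
    intro n
    rw [geom_sum_eq (by linarith : β ≠ 1)]
    rw [div_eq_div_iff (by linarith) (by linarith)]
    ring
  -- f is bounded below, hence cobounded
  have hfbdd : ∀ i, -(C / (1 - β)) ≤ f i := by
    intro i
    have h1 : |f i| ≤ C / (1 - β) := by
      calc |f i| ≤ ∑ j ∈ Finset.range (i + 1), |β ^ j * z (i - j)| :=
            Finset.abs_sum_le_sum_abs _ _
        _ ≤ ∑ j ∈ Finset.range (i + 1), β ^ j * C := by
            apply Finset.sum_le_sum
            intro j _
            rw [abs_mul, abs_pow, abs_of_pos hβ0]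
            exact mul_le_mul_of_nonneg_left (hC _) (pow_nonneg hβ0.le _)
        _ = (1 - β ^ (i + 1)) / (1 - β) * C := by rw [← Finset.sum_mul, hgeom]
        _ ≤ C / (1 - β) := by
            rw [div_mul_eq_mul_div, div_le_div_iff₀ h1β h1β]
            have : 0 ≤ β ^ (i + 1) := pow_nonneg hβ0.le _
            nlinarith [mul_nonneg (mul_nonneg hC0 this) h1β.le]
    linarith [(abs_le.mp h1).1]
  have hcob : Filter.IsCoboundedUnder (· ≤ ·) Filter.atTop f :=
    Filter.isCoboundedUnder_le_of_le Filter.atTop hfbdd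
  -- suffices eventual bound for each ε
  apply le_of_forall_pos_le_add
  intro ε hε
  apply Filter.limsup_le_of_le hcob
  set δ : ℝ := ε * (1 - β) / 2 with hδ
  have hδ0 : 0 < δ := by positivity
  -- eventually z n ≤ L + δ
  have hzb : Filter.IsBoundedUnder (· ≤ ·) Filter.atTop z :=
    Filter.isBoundedUnder_of ⟨C, fun i => (abs_le.mp (hC i)).2⟩
  have hev : ∀ᶠ n in Filter.atTop, z n < L + δ :=
    Filter.eventually_lt_of_limsup_lt (by rw [hL]; linarith) hzb
  obtain ⟨N, hN⟩ := Filter.eventually_atTop.mp hev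
  set B : ℝ := C + |L + δ| with hB
  have hB0 : 0 ≤ B := by positivity
  have hβN : 0 < β ^ N := pow_pos hβ0 N
  set K : ℝ := N * B / β ^ N + |L + δ| / (1 - β) with hK
  -- key pointwise estimate
  have key : ∀ i, N ≤ i → f i ≤ (L + δ) / (1 - β) + K * β ^ (i + 1) := by
    intro i hi
    have hNi : N ≤ i + 1 := le_trans hi (Nat.le_succ i)
    have hsplit : f i = (∑ j ∈ Finset.range (i + 1), β ^ j * (z (i - j) - (L + δ)))
        + (L + δ) * ((1 - β ^ (i + 1)) / (1 - β)) := by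
      rw [hf]
      simp only []
      rw [← hgeom (i + 1), Finset.mul_sum, ← Finset.sum_add_distrib]
      apply Finset.sum_congr rfl
      intro j _
      ring
    rw [hsplit]
    have hsum : (∑ j ∈ Finset.range (i + 1), β ^ j * (z (i - j) - (L + δ)))
        ≤ N * B / β ^ N * β ^ (i + 1) := by
      have hdecomp : Finset.range (i + 1) =
          Finset.Ico 0 (i + 1 - N) ∪ Finset.Ico (i + 1 - N) (i + 1) := by
        rw [Finset.range_eq_Ico, Finset.Ico_union_Ico_eq_Ico (Nat.zero_le _) (by omega)]
      rw [hdecomp, Finset.sum_union (by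
        apply Finset.Ico_disjoint_Ico_consecutive)]
      have h1 : (∑ j ∈ Finset.Ico 0 (i + 1 - N), β ^ j * (z (i - j) - (L + δ))) ≤ 0 := by
        apply Finset.sum_nonpos
        intro j hj
        simp only [Finset.mem_Ico] at hj
        have : N ≤ i - j := by omega
        have hz : z (i - j) < L + δ := hN _ this
        have : z (i - j) - (L + δ) ≤ 0 := by linarith
        exact mul_nonpos_of_nonneg_of_nonpos (pow_nonneg hβ0.le _) this
      have h2 : (∑ j ∈ Finset.Ico (i + 1 - N) (i + 1), β ^ j * (z (i - j) - (L + δ)))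
          ≤ N * (β ^ (i + 1 - N) * B) := by
        calc (∑ j ∈ Finset.Ico (i + 1 - N) (i + 1), β ^ j * (z (i - j) - (L + δ)))
            ≤ ∑ j ∈ Finset.Ico (i + 1 - N) (i + 1), β ^ (i + 1 - N) * B := by
              apply Finset.sum_le_sum
              intro j hj
              simp only [Finset.mem_Ico] at hj
              have hpow : β ^ j ≤ β ^ (i + 1 - N) :=
                pow_le_pow_of_le_one hβ0.le hβ1.le hj.1
              have hz : |z (i - j) - (L + δ)| ≤ B := by
                rw [hB, sub_eq_add_neg]
                calc |z (i - j) + -(L + δ)| ≤ |z (i - j)| + |-(L + δ)| := abs_add_le _ _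
                  _ = |z (i - j)| + |L + δ| := by rw [abs_neg]
                  _ ≤ C + |L + δ| := by linarith [hC (i - j)]
              calc β ^ j * (z (i - j) - (L + δ)) ≤ β ^ j * B :=
                    mul_le_mul_of_nonneg_left (le_trans (le_abs_self _) hz)
                      (pow_nonneg hβ0.le _)
                _ ≤ β ^ (i + 1 - N) * B := mul_le_mul_of_nonneg_right hpow hB0
          _ = (Finset.Ico (i + 1 - N) (i + 1)).card * (β ^ (i + 1 - N) * B) := by
              rw [Finset.sum_const, nsmul_eq_mul]
          _ = N * (β ^ (i + 1 - N) * B) := by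
              rw [Nat.card_Ico]
              congr 2
              omega
      have hpoweq : β ^ (i + 1 - N) = β ^ (i + 1) / β ^ N := by
        rw [eq_div_iff hβN.ne', ← pow_add]
        congr 1
        omega
      have heq : (N : ℝ) * (β ^ (i + 1 - N) * B) = N * B / β ^ N * β ^ (i + 1) := by
        rw [hpoweq]; field_simp
      rw [← heq]
      linarith
    have hmain : (L + δ) * ((1 - β ^ (i + 1)) / (1 - β))
        ≤ (L + δ) / (1 - β) + |L + δ| / (1 - β) * β ^ (i + 1) := by
      have hp : 0 ≤ β ^ (i + 1) := pow_nonneg hβ0.le _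
      have habs : -(L + δ) ≤ |L + δ| := neg_le_abs _
      have h' : -(L + δ) * β ^ (i + 1) ≤ |L + δ| * β ^ (i + 1) :=
        mul_le_mul_of_nonneg_right habs hp
      have hrw : (L + δ) / (1 - β) + |L + δ| / (1 - β) * β ^ (i + 1)
          = ((L + δ) + |L + δ| * β ^ (i + 1)) / (1 - β) := by ring
      have hlw : (L + δ) * ((1 - β ^ (i + 1)) / (1 - β))
          = ((L + δ) * (1 - β ^ (i + 1))) / (1 - β) := by ring
      rw [hrw, hlw, div_le_div_iff₀ h1β h1β]
      nlinarith [h']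
    have : K * β ^ (i + 1) = N * B / β ^ N * β ^ (i + 1)
        + |L + δ| / (1 - β) * β ^ (i + 1) := by rw [hK]; ring
    linarith
  -- eventually K * β^(i+1) ≤ ε/2
  have htend : Filter.Tendsto (fun i : ℕ => K * β ^ (i + 1)) Filter.atTop (nhds 0) := by
    have h1 : Filter.Tendsto (fun i : ℕ => β ^ (i + 1)) Filter.atTop (nhds 0) :=
      (tendsto_pow_atTop_nhds_zero_of_lt_one hβ0.le hβ1).comp
        (Filter.tendsto_add_atTop_nat 1)
    simpa using h1.const_mul K
  have hsmall : ∀ᶠ i in Filter.atTop, K * β ^ (i + 1) < ε / 2 :=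
    htend.eventually_lt_const (by linarith)
  filter_upwards [hsmall, Filter.eventually_ge_atTop N] with i hsi hNi
  have h1 : f i ≤ (L + δ) / (1 - β) + K * β ^ (i + 1) := key i hNi
  have h2 : (L + δ) / (1 - β) = L / (1 - β) + ε / 2 := by
    have hδd : δ / (1 - β) = ε / 2 := by
      rw [hδ, div_eq_div_iff h1β.ne' (by norm_num : (2:ℝ) ≠ 0)]
      ring
    rw [add_div, hδd]
  calc f i ≤ (L + δ) / (1 - β) + K * β ^ (i + 1) := h1
    _ ≤ L / (1 - β) + ε / 2 + ε / 2 := by rw [h2]; linarith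
    _ = L / (1 - β) + ε := by ring
end

section
/- With the randomized quantizer of the previous statement, the compression error e(x) = Q(x) - x satisfies E‖e(x)‖² ≤ min{ M/(2^r-1)², √M/(2^r-1) } · ‖x‖². -/
/-!
Write `x m = ‖x‖ · sign (x m) · χ m`. The error in coordinate `m` is then
`‖x‖ · sign (x m) · θ · (J - c)` with `c = χ m / θ`, where `J` rounds `c` up to `⌊c⌋ + 1` with
probability `fract c` and down to `⌊c⌋` otherwise. Such a two-point variable has
`E (J - c)² = fract c · (1 - fract c)`, which is at most `1` and at most `c`. Summing over the
coordinates, the first bound gives `M θ² ‖x‖²` and the second gives `θ ‖x‖² ∑ χ m ≤ θ √M ‖x‖²`,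
by Cauchy–Schwarz and `∑ χ m ² ≤ 1`.
-/

open MeasureTheory Finset

theorem Real.sign_mul_abs (a : ℝ) : Real.sign a * |a| = a := by
  rcases lt_trichotomy a 0 with h | rfl | h
  · rw [Real.sign_of_neg h, abs_of_neg h]; ring
  · simp
  · rw [Real.sign_of_pos h, abs_of_pos h, one_mul]

theorem Real.sign_sq_le_one (a : ℝ) : Real.sign a ^ 2 ≤ 1 := by
  rcases Real.sign_apply_eq a with h | h | h <;> norm_num [h]

theorem Int.fract_mul_one_sub_fract_le_one (c : ℝ) : Int.fract c * (1 - Int.fract c) ≤ 1 := by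
  nlinarith [Int.fract_nonneg c, Int.fract_lt_one c]

theorem Int.fract_mul_one_sub_fract_le_self {c : ℝ} (hc : 0 ≤ c) :
    Int.fract c * (1 - Int.fract c) ≤ c := by
  have hfloor : (0 : ℝ) ≤ ⌊c⌋ := mod_cast Int.floor_nonneg.mpr hc
  nlinarith [Int.self_sub_floor c, Int.fract_nonneg c]

theorem mul_sign_mul_abs_div_of_abs_le {a n : ℝ} (h : |a| ≤ n) :
    n * Real.sign a * (|a| / n) = a := by
  rcases eq_or_ne n 0 with rfl | hn
  · simpa [eq_comm] using h
  · rw [mul_comm n, mul_assoc, mul_div_cancel₀ _ hn, Real.sign_mul_abs]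

section Euclidean

variable {ι : Type*} [Fintype ι] (x : ι → ℝ)

theorem abs_le_sqrt_sum_sq (i : ι) : |x i| ≤ √(∑ j, x j ^ 2) :=
  Real.abs_le_sqrt (single_le_sum (fun j _ => sq_nonneg (x j)) (mem_univ i))

theorem sum_sq_abs_div_sqrt_sum_sq_le_one : ∑ i, (|x i| / √(∑ j, x j ^ 2)) ^ 2 ≤ 1 := by
  simp_rw [div_pow, sq_abs, ← sum_div, Real.sq_sqrt (sum_nonneg fun j _ => sq_nonneg (x j))]
  exact div_self_le_one _

end Euclidean

theorem sum_le_sqrt_card_of_sum_sq_le_one {ι : Type*} (s : Finset ι) (f : ι → ℝ)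
    (hf : ∑ i ∈ s, f i ^ 2 ≤ 1) : ∑ i ∈ s, f i ≤ √(#s) := by
  refine Real.le_sqrt_of_sq_le ?_
  calc (∑ i ∈ s, f i) ^ 2 ≤ #s * ∑ i ∈ s, f i ^ 2 := sq_sum_le_card_mul_sum_sq
    _ ≤ #s := mul_le_of_le_one_right (Nat.cast_nonneg _) hf

section TwoValued

variable {Ω α : Type*} {Y : Ω → α} {a b : α}

theorem comp_eq_const_add_indicator_of_forall_eq_or_eq (hY : ∀ ω, Y ω = b ∨ Y ω = a)
    (g : α → ℝ) :
    (fun ω => g (Y ω)) = fun ω => g a + {ω | Y ω = b}.indicator (fun _ => g b - g a) ω := by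
  funext ω
  rcases hY ω with h | h
  · simp [h]
  · by_cases hab : a = b <;> simp [h, hab]

variable [MeasurableSpace Ω] {ℙ : Measure Ω} [MeasurableSpace α] [MeasurableSingletonClass α]

theorem integrable_comp_of_forall_eq_or_eq [IsFiniteMeasure ℙ] (hmeas : Measurable Y)
    (hY : ∀ ω, Y ω = b ∨ Y ω = a) (g : α → ℝ) : Integrable (fun ω => g (Y ω)) ℙ := by
  rw [comp_eq_const_add_indicator_of_forall_eq_or_eq hY]
  exact (integrable_const _).add
    ((integrable_const _).indicator (hmeas (measurableSet_singleton b)))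

theorem integral_comp_of_forall_eq_or_eq [IsProbabilityMeasure ℙ] (hmeas : Measurable Y)
    (hY : ∀ ω, Y ω = b ∨ Y ω = a) (g : α → ℝ) :
    ∫ ω, g (Y ω) ∂ℙ = g a + (g b - g a) * ℙ.real {ω | Y ω = b} := by
  have hS : MeasurableSet {ω | Y ω = b} := hmeas (measurableSet_singleton b)
  rw [comp_eq_const_add_indicator_of_forall_eq_or_eq hY,
    integral_add (integrable_const _) ((integrable_const _).indicator hS),
    integral_const, integral_indicator_const _ hS]
  simp [mul_comm]

end TwoValued

section StochasticRounding

variable {Ω : Type*} [MeasurableSpace Ω] {ℙ : Measure Ω} [IsProbabilityMeasure ℙ] {J : Ω → ℝ}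

theorem integral_sub_sq_of_stochastic_round (hmeas : Measurable J) {c : ℝ}
    (hJ : ∀ ω, J ω = ⌊c⌋ + 1 ∨ J ω = ⌊c⌋)
    (hprob : ℙ {ω | J ω = ⌊c⌋ + 1} = ENNReal.ofReal (Int.fract c)) :
    ∫ ω, (J ω - c) ^ 2 ∂ℙ = Int.fract c * (1 - Int.fract c) := by
  rw [integral_comp_of_forall_eq_or_eq hmeas hJ (fun y => (y - c) ^ 2), measureReal_def, hprob,
    ENNReal.toReal_ofReal (Int.fract_nonneg c), ← Int.self_sub_floor]
  ring

theorem integral_mul_sub_sq_le_of_stochastic_round {θ χ a x : ℝ} (hθ : 0 < θ) (hχ : 0 ≤ χ)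
    (hx : x = a * χ) (hmeas : Measurable J) (hJ : ∀ ω, J ω = ⌊χ / θ⌋ + 1 ∨ J ω = ⌊χ / θ⌋)
    (hprob : ℙ {ω | J ω = ⌊χ / θ⌋ + 1} = ENNReal.ofReal ((χ - ⌊χ / θ⌋ * θ) / θ)) :
    ∫ ω, (a * (J ω * θ) - x) ^ 2 ∂ℙ ≤ a ^ 2 * min (θ ^ 2) (θ * χ) := by
  rw [sub_div, mul_div_cancel_right₀ _ hθ.ne', Int.self_sub_floor] at hprob
  have hfactor ω : (a * (J ω * θ) - x) ^ 2 = (a * θ) ^ 2 * (J ω - χ / θ) ^ 2 := by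
    rw [hx]; field_simp
  simp_rw [hfactor]
  rw [integral_const_mul, integral_sub_sq_of_stochastic_round hmeas hJ hprob, mul_pow, mul_assoc]
  gcongr
  refine le_min (mul_le_of_le_one_right (sq_nonneg θ) (Int.fract_mul_one_sub_fract_le_one _)) ?_
  calc θ ^ 2 * (Int.fract (χ / θ) * (1 - Int.fract (χ / θ))) ≤ θ ^ 2 * (χ / θ) := by
        gcongr
        exact Int.fract_mul_one_sub_fract_le_self (div_nonneg hχ hθ.le)
    _ = θ * χ := by field_simp

end StochasticRounding

theorem randomized_quantizer_variance_bound_general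
    {Ω : Type*} [MeasurableSpace Ω] (ℙ : Measure Ω) [IsProbabilityMeasure ℙ]
    (M r : ℕ) (hr : 1 ≤ r) (x : Fin M → ℝ)
    (nrm θ : ℝ) (χ : Fin M → ℝ)
    (hnrm : nrm = Real.sqrt (∑ m, (x m) ^ 2))
    (hθ : θ = 1 / ((2 : ℝ) ^ r - 1))
    (hχ : ∀ m, χ m = |x m| / nrm)
    (jtx : Fin M → Ω → ℝ)
    (hmeas : ∀ m, Measurable (jtx m))
    (hvals : ∀ m ω, jtx m ω = (⌊χ m / θ⌋ : ℝ) + 1 ∨ jtx m ω = (⌊χ m / θ⌋ : ℝ))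
    (hprob : ∀ m, ℙ {ω | jtx m ω = (⌊χ m / θ⌋ : ℝ) + 1}
      = ENNReal.ofReal ((χ m - (⌊χ m / θ⌋ : ℝ) * θ) / θ)) :
    (∫ ω, ∑ m, (nrm * Real.sign (x m) * (jtx m ω * θ) - x m) ^ 2 ∂ℙ)
      ≤ min ((M : ℝ) / ((2 : ℝ) ^ r - 1) ^ 2) (Real.sqrt M / ((2 : ℝ) ^ r - 1))
        * nrm ^ 2 := by
  have hθ0 : 0 < θ := by
    rw [hθ, one_div_pos, sub_pos]
    exact one_lt_pow₀ one_lt_two (by omega)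
  have hcoord m : ∫ ω, (nrm * Real.sign (x m) * (jtx m ω * θ) - x m) ^ 2 ∂ℙ
      ≤ nrm ^ 2 * min (θ ^ 2) (θ * χ m) := by
    have hx_eq : x m = nrm * Real.sign (x m) * χ m := by
      rw [hχ, hnrm, mul_sign_mul_abs_div_of_abs_le (abs_le_sqrt_sum_sq x m)]
    have hχ0 : 0 ≤ χ m := by rw [hχ, hnrm]; positivity
    refine (integral_mul_sub_sq_le_of_stochastic_round hθ0 hχ0 hx_eq (hmeas m) (hvals m)
      (hprob m)).trans ?_
    rw [mul_pow]
    gcongr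
    exact mul_le_of_le_one_right (sq_nonneg nrm) (Real.sign_sq_le_one _)
  have hχ_sum : ∑ m, χ m ≤ √M := by
    simpa using sum_le_sqrt_card_of_sum_sq_le_one univ χ
      (by simpa only [hχ, hnrm] using sum_sq_abs_div_sqrt_sum_sq_le_one x)
  have hint m : Integrable (fun ω => (nrm * Real.sign (x m) * (jtx m ω * θ) - x m) ^ 2) ℙ :=
    integrable_comp_of_forall_eq_or_eq (hmeas m) (hvals m)
      fun y => (nrm * Real.sign (x m) * (y * θ) - x m) ^ 2
  rw [integral_finsetSum _ fun m _ => hint m,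
    min_mul_of_nonneg _ _ (sq_nonneg nrm)]
  refine le_min ?_ ?_
  · calc _ ≤ ∑ m : Fin M, nrm ^ 2 * θ ^ 2 :=
          sum_le_sum fun m _ => (hcoord m).trans (by gcongr; exact min_le_left _ _)
      _ = (M : ℝ) / (2 ^ r - 1) ^ 2 * nrm ^ 2 := by simp [hθ]; ring
  · calc _ ≤ ∑ m, nrm ^ 2 * θ * χ m :=
          sum_le_sum fun m _ => (hcoord m).trans (by rw [mul_assoc]; gcongr; exact min_le_right _ _)
      _ ≤ nrm ^ 2 * θ * √M := by rw [← mul_sum]; gcongr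
      _ = √M / (2 ^ r - 1) * nrm ^ 2 := by rw [hθ]; ring

/-- The randomized quantizer's compression error `e(x) = Q(x) - x`
satisfies `E‖e(x)‖² ≤ min{M/(2^r-1)², √M/(2^r-1)}·‖x‖²`. Same setup as Statement 4. -/
theorem randomized_quantizer_variance_bound
    {Ω : Type*} [MeasurableSpace Ω] (ℙ : Measure Ω) [IsProbabilityMeasure ℙ]
    (M r : ℕ) (hr : 1 ≤ r) (x : Fin M → ℝ) (hx : x ≠ 0)
    (nrm θ : ℝ) (χ : Fin M → ℝ)
    (hnrm : nrm = Real.sqrt (∑ m, (x m) ^ 2))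
    (hθ : θ = 1 / ((2 : ℝ) ^ r - 1))
    (hχ : ∀ m, χ m = |x m| / nrm)
    (jtx : Fin M → Ω → ℝ)
    (hmeas : ∀ m, Measurable (jtx m))
    (hvals : ∀ m ω, jtx m ω = (⌊χ m / θ⌋ : ℝ) + 1 ∨ jtx m ω = (⌊χ m / θ⌋ : ℝ))
    (hprob : ∀ m, ℙ {ω | jtx m ω = (⌊χ m / θ⌋ : ℝ) + 1}
      = ENNReal.ofReal ((χ m - (⌊χ m / θ⌋ : ℝ) * θ) / θ))
    (hindep : ProbabilityTheory.iIndepFun jtx ℙ) :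
    (∫ ω, ∑ m, (nrm * Real.sign (x m) * (jtx m ω * θ) - x m) ^ 2 ∂ℙ)
      ≤ min ((M : ℝ) / ((2 : ℝ) ^ r - 1) ^ 2) (Real.sqrt M / ((2 : ℝ) ^ r - 1))
        * nrm ^ 2 :=
  randomized_quantizer_variance_bound_general ℙ M r hr x nrm θ χ hnrm hθ hχ jtx hmeas hvals hprob
end
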